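/- Let x,y ∈ ℝ^d with x ≠ y, let f be a 1-field with dom(f) = {x,y}, M := Γ¹(f;{x,y}) > 0, and let s ∈ {−1,1} and c := (x+y)/2 + s(D_xf − D_yf)/(2M) be as in the biponctual structure lemma. If A(f;x,y) = 0, then M = B(f;x,y) = ‖D_xf − D_yf‖/‖x−y‖, ‖2c − (x+y)‖ = ‖x−y‖, and (x−c)·(c−y) = 0. -/

import Mathlib

open scoped ENNReal RealInnerProductSpace
open Metric Set

/-- A 1-field assigns to each point `x` the pair `(f_x, D_xf)` representing the affine
polynomial `a ↦ f_x + ⟪D_xf, a - x⟫`; `eval1 f x a` is the evaluation `f(x)(a)`. -/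
noncomputable def eval1 {d : ℕ} (f : EuclideanSpace ℝ (Fin d) → ℝ × EuclideanSpace ℝ (Fin d))
    (x a : EuclideanSpace ℝ (Fin d)) : ℝ :=
  (f x).1 + ⟪(f x).2, a - x⟫

/-- `Γ¹(f;x,y) = 2 sup_a |f(x)(a) - f(y)(a)| / (‖x-a‖² + ‖y-a‖²)`. -/
noncomputable def gamma1 {d : ℕ} (f : EuclideanSpace ℝ (Fin d) → ℝ × EuclideanSpace ℝ (Fin d))
    (x y : EuclideanSpace ℝ (Fin d)) : ℝ :=
  2 * ⨆ a : EuclideanSpace ℝ (Fin d),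
    |eval1 f x a - eval1 f y a| / (‖x - a‖ ^ 2 + ‖y - a‖ ^ 2)

/-- `Γ¹(f;D) = sup {Γ¹(f;x,y) : x,y ∈ D, x ≠ y}`, valued in `[0,∞]`. -/
noncomputable def gamma1On {d : ℕ} (f : EuclideanSpace ℝ (Fin d) → ℝ × EuclideanSpace ℝ (Fin d))
    (D : Set (EuclideanSpace ℝ (Fin d))) : ℝ≥0∞ :=
  ⨆ x ∈ D, ⨆ y ∈ D, ⨆ (_ : x ≠ y), ENNReal.ofReal (gamma1 f x y)

/-- `A(f;x,y) = (2(f_x - f_y) + ⟪D_xf + D_yf, y - x⟫) / ‖x-y‖²`. -/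
noncomputable def Afun {d : ℕ} (f : EuclideanSpace ℝ (Fin d) → ℝ × EuclideanSpace ℝ (Fin d))
    (x y : EuclideanSpace ℝ (Fin d)) : ℝ :=
  (2 * ((f x).1 - (f y).1) + ⟪(f x).2 + (f y).2, y - x⟫) / ‖x - y‖ ^ 2

set_option maxHeartbeats 800000 in
/-- If `A(f;x,y) = 0` for a biponctual 1-field, then `M = B(f;x,y)`,
`‖2c - (x+y)‖ = ‖x - y‖`, and `(x - c) ⊥ (c - y)`. -/
theorem A_eq_zero_consequences {d : ℕ}
    (x y : EuclideanSpace ℝ (Fin d)) (hxy : x ≠ y)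
    (f : EuclideanSpace ℝ (Fin d) → ℝ × EuclideanSpace ℝ (Fin d))
    (M s : ℝ) (hM : M = gamma1 f x y) (hMpos : 0 < M) (hs : s = 1 ∨ s = -1)
    (c : EuclideanSpace ℝ (Fin d))
    (hc : c = midpoint ℝ x y + (s / (2 * M)) • ((f x).2 - (f y).2))
    (hcM : M = 2 * s * (eval1 f x c - eval1 f y c) / (‖x - c‖ ^ 2 + ‖y - c‖ ^ 2))
    (hA : Afun f x y = 0) :
    M = ‖(f x).2 - (f y).2‖ / ‖x - y‖ ∧
    ‖(2 : ℝ) • c - (x + y)‖ = ‖x - y‖ ∧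
    ⟪x - c, c - y⟫ = 0 := by
  have hM0 : M ≠ 0 := ne_of_gt hMpos
  have hs2 : s ^ 2 = 1 := by rcases hs with h | h <;> simp [h]
  have hv0 : x - y ≠ 0 := sub_ne_zero.mpr hxy
  have hvnorm : (0:ℝ) < ‖x - y‖ := norm_pos_iff.mpr hv0
  have hvv : (0:ℝ) < ⟪x - y, x - y⟫ := by
    rw [real_inner_self_eq_norm_sq]; positivity
  set u : EuclideanSpace ℝ (Fin d) := (f x).2 - (f y).2 with hu
  set v : EuclideanSpace ℝ (Fin d) := x - y with hv
  have hmid : midpoint ℝ x y = (2⁻¹:ℝ) • (x + y) := by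
    rw [midpoint_eq_smul_add]; norm_num
  have hxc : x - c = (2⁻¹:ℝ) • v - (s / (2 * M)) • u := by
    rw [hc, hmid, hv, hu]; module
  have hyc : y - c = -((2⁻¹:ℝ) • v) - (s / (2 * M)) • u := by
    rw [hc, hmid, hv, hu]; module
  have hcy : c - y = (2⁻¹:ℝ) • v + (s / (2 * M)) • u := by
    rw [hc, hmid, hv, hu]; module
  have hcx : c - x = (s / (2 * M)) • u - (2⁻¹:ℝ) • v := by
    rw [hc, hmid, hv, hu]; module
  -- from hA
  have hA' : 2 * ((f x).1 - (f y).1) + ⟪(f x).2 + (f y).2, y - x⟫ = 0 := by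
    have := hA
    rw [Afun, div_eq_zero_iff] at this
    rcases this with h | h
    · exact h
    · exact absurd h (by positivity)
  have hyx : (y - x : EuclideanSpace ℝ (Fin d)) = -v := by rw [hv]; module
  rw [hyx, inner_neg_right] at hA'
  -- value of eval difference
  have hE : eval1 f x c - eval1 f y c = (s / (2 * M)) * ⟪u, u⟫ := by
    rw [eval1, eval1, hcx, hcy]
    simp only [inner_sub_right, inner_add_right, inner_smul_right, hu,
      inner_sub_left, inner_add_left]
    have h1 : ⟪(f x).2 + (f y).2, v⟫ = ⟪(f x).2, v⟫ + ⟪(f y).2, v⟫ := inner_add_left _ _ _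
    nlinarith [hA', h1, real_inner_comm (f x).2 (f y).2]
  -- sum of squares
  have hS : ‖x - c‖ ^ 2 + ‖y - c‖ ^ 2
      = ⟪v, v⟫ / 2 + (s / (2 * M)) ^ 2 * 2 * ⟪u, u⟫ := by
    rw [← real_inner_self_eq_norm_sq, ← real_inner_self_eq_norm_sq, hxc, hyc]
    simp only [inner_sub_left, inner_sub_right, inner_neg_left, inner_neg_right,
      inner_smul_left, inner_smul_right, starRingEnd_apply, star_trivial]
    rw [real_inner_comm u v]
    ring
  have huu : (0:ℝ) ≤ ⟪u, u⟫ := real_inner_self_nonneg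
  have hSpos : (0:ℝ) < ‖x - c‖ ^ 2 + ‖y - c‖ ^ 2 := by
    rw [hS]; positivity
  have hcM' : M * (‖x - c‖ ^ 2 + ‖y - c‖ ^ 2) = 2 * s * (eval1 f x c - eval1 f y c) := by
    rw [hcM]; field_simp
  rw [hE, hS] at hcM'
  -- key identity
  have key : M ^ 2 * ⟪v, v⟫ = ⟪u, u⟫ := by
    generalize hP : (⟪u, u⟫ : ℝ) = P at hcM' ⊢
    generalize hQ : (⟪v, v⟫ : ℝ) = Q at hcM' ⊢
    have h2 : M * (M * (Q / 2 + (s / (2 * M)) ^ 2 * 2 * P)) = M * (2 * s * (s / (2 * M) * P)) := by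
      rw [hcM']
    field_simp at h2
    have h3 : (8 * M ^ 3) * (M ^ 2 * Q - P) = 0 := by linear_combination 8 * M ^ 3 * h2 + 8 * M ^ 3 * P * hs2
    have h8 : (8 : ℝ) * M ^ 3 ≠ 0 := by positivity
    have := mul_eq_zero.mp h3
    rcases this with h | h
    · exact absurd h h8
    · linarith
  have hMv : M * ‖v‖ = ‖u‖ := by
    have hsq : (M * ‖v‖) ^ 2 = ‖u‖ ^ 2 := by
      linear_combination key - M ^ 2 * real_inner_self_eq_norm_sq v + real_inner_self_eq_norm_sq u
    have hfac : (M * ‖v‖ - ‖u‖) * (M * ‖v‖ + ‖u‖) = 0 := by nlinarith [hsq]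
    have hpos : (0:ℝ) < M * ‖v‖ + ‖u‖ := by positivity
    rcases mul_eq_zero.mp hfac with h | h
    · linarith
    · linarith
  refine ⟨?_, ?_, ?_⟩
  · rw [eq_div_iff (ne_of_gt hvnorm)]; exact hMv
  · have h2c : (2:ℝ) • c - (x + y) = (s / M) • u := by
      rw [hc, hmid, hu]
      match_scalars <;> (field_simp; try ring)
    rw [h2c, norm_smul]
    have habs : ‖(s/M : ℝ)‖ = 1 / M := by
      rcases hs with h | h <;>
        simp [h, Real.norm_eq_abs, abs_div, abs_of_pos hMpos]
    rw [habs]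
    field_simp
    linarith [hMv]
  · rw [hxc, hcy]
    simp only [inner_sub_left, inner_add_right, inner_smul_left, inner_smul_right,
      starRingEnd_apply, star_trivial]
    rw [real_inner_comm u v]
    generalize hP : (⟪u, u⟫ : ℝ) = P at key ⊢
    generalize hQ : (⟪v, v⟫ : ℝ) = Q at key ⊢
    generalize hT : (⟪u, v⟫ : ℝ) = T
    rcases hs with h | h <;> subst h <;> field_simp <;> linear_combination key
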